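/- arXiv:2407.21260 — 5 statements merged into one kernel-verified Lean document; each statement's English description precedes it below -/
import Mathlib

section
/- If a sketch ψ is Bellman closed, then it is mixture-consistent. That is, if there exists an operator 𝒯_ψ such that ψ(𝒯η̄) = 𝒯_ψ ψ(η̄) for all collections of return distributions η̄, where 𝒯 is the distributional Bellman operator (translation by reward followed by mixing over next-state transition probabilities), then the value of ψ on any mixture ν·η₁ + (1−ν)·η₂ is a function of ψ(η₁), ψ(η₂), and ν alone. -/
open MeasureTheory
open scoped ENNReal BigOperators

/-- A sketch `ψ : 𝒫(ℝ) → ℝ^N` is mixture-consistent if the sketch of any mixture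
`ν·η₁ + (1−ν)·η₂` of probability distributions is a function of `ψ(η₁)`, `ψ(η₂)`, `ν`. -/
def MixtureConsistent {N : ℕ} (ψ : Measure ℝ → Fin N → ℝ) : Prop :=
  ∃ h : (Fin N → ℝ) → (Fin N → ℝ) → ℝ → Fin N → ℝ,
    ∀ η₁ η₂ : Measure ℝ, IsProbabilityMeasure η₁ → IsProbabilityMeasure η₂ →
      ∀ ν : ℝ, 0 ≤ ν → ν ≤ 1 →
        ψ (ENNReal.ofReal ν • η₁ + ENNReal.ofReal (1 - ν) • η₂) = h (ψ η₁) (ψ η₂) ν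

/-- A sketch `ψ` is Bellman closed if for every (finite-state) MDP data — transition
kernel `P` and reward `r` — there is an operator `G = 𝒯_ψ` with
`ψ(𝒯 ηb) = G (ψ ∘ ηb)` for every collection of return distributions `ηb`, where
`𝒯 ηb (s) = (𝓑_{r s})_# ∑_{s'} P s s' • ηb s'` is the distributional Bellman operator. -/
def BellmanClosed {N : ℕ} (ψ : Measure ℝ → Fin N → ℝ) : Prop :=
  ∀ (S : Type) [Fintype S] (P : S → S → ℝ≥0∞), (∀ s, ∑ s', P s s' = 1) →
    ∀ r : S → ℝ,
      ∃ G : (S → Fin N → ℝ) → (S → Fin N → ℝ),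
        ∀ ηb : S → Measure ℝ, (∀ s, IsProbabilityMeasure (ηb s)) →
          (fun s => ψ (Measure.map (fun x => r s + x) (∑ s', P s s' • ηb s')))
            = G (fun s => ψ (ηb s))

theorem BellmanClosed.exists_sketch_sum_smul_eq {N : ℕ} {ψ : Measure ℝ → Fin N → ℝ}
    (hBC : BellmanClosed ψ) {ι : Type} [Fintype ι] (p : ι → ℝ≥0∞) (hp : ∑ i, p i = 1) :
    ∃ F : (ι → Fin N → ℝ) → Fin N → ℝ, ∀ η : ι → Measure ℝ,
      (∀ i, IsProbabilityMeasure (η i)) → ψ (∑ i, p i • η i) = F (fun i => ψ (η i)) := by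
  -- In the MDP with zero reward where every state moves according to `p`,
  -- the Bellman target at any state is the mixture `∑ i, p i • η i`.
  obtain ⟨G, hG⟩ := hBC ι (fun _ => p) (fun _ => hp) 0
  obtain ⟨i₀, -, -⟩ := Finset.exists_ne_zero_of_sum_ne_zero (hp ▸ one_ne_zero)
  refine ⟨fun φ => G φ i₀, fun η hη => ?_⟩
  simpa using congrFun (hG η hη) i₀

theorem ENNReal.ofReal_add_ofReal_one_sub {ν : ℝ} (h₀ : 0 ≤ ν) (h₁ : ν ≤ 1) :
    ENNReal.ofReal ν + ENNReal.ofReal (1 - ν) = 1 := by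
  rw [← ENNReal.ofReal_add h₀ (sub_nonneg.2 h₁), add_sub_cancel, ENNReal.ofReal_one]

/-- If a sketch is Bellman closed then it is mixture-consistent. -/
theorem bellmanClosed_mixtureConsistent {N : ℕ} (ψ : Measure ℝ → Fin N → ℝ)
    (hBC : BellmanClosed ψ) : MixtureConsistent ψ := by
  have hmix : ∀ ν : ℝ, ∃ F : (Fin 2 → Fin N → ℝ) → Fin N → ℝ, 0 ≤ ν → ν ≤ 1 →
      ∀ η : Fin 2 → Measure ℝ, (∀ i, IsProbabilityMeasure (η i)) →
        ψ (∑ i, ![ENNReal.ofReal ν, ENNReal.ofReal (1 - ν)] i • η i) = F (fun i => ψ (η i)) := by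
    intro ν
    by_cases hν : 0 ≤ ν ∧ ν ≤ 1
    · obtain ⟨F, hF⟩ := hBC.exists_sketch_sum_smul_eq ![ENNReal.ofReal ν, ENNReal.ofReal (1 - ν)]
        (by simpa using ENNReal.ofReal_add_ofReal_one_sub hν.1 hν.2)
      exact ⟨F, fun _ _ => hF⟩
    · exact ⟨0, fun h₀ h₁ => absurd ⟨h₀, h₁⟩ hν⟩
  choose F hF using hmix
  refine ⟨fun a b ν => F ν ![a, b], fun η₁ η₂ h₁ h₂ ν h₀ h₁' => ?_⟩
  calc ψ (ENNReal.ofReal ν • η₁ + ENNReal.ofReal (1 - ν) • η₂)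
      = ψ (∑ i, ![ENNReal.ofReal ν, ENNReal.ofReal (1 - ν)] i • ![η₁, η₂] i) := by
        simp [Fin.sum_univ_two]
    _ = F ν (fun i => ψ (![η₁, η₂] i)) := hF ν h₀ h₁' _ (Fin.forall_fin_two.2 ⟨h₁, h₂⟩)
    _ = F ν ![ψ η₁, ψ η₂] := by
        congr 1
        funext i
        fin_cases i <;> rfl
end

section
/- The maximum functional is not Bellman unbiased: for k ≥ 1 samples, there is no function φ : ℝ^k → ℝ such that for every finitely supported probability distribution P on ℝ, E_{X₁,…,X_k i.i.d.∼P}[φ(X₁,…,X_k)] = max(support(P)). (In particular, the maximum of a finite-support distribution admits no unbiased estimator from i.i.d. samples.) -/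
/-!
Test the estimator on the two-point laws `(1 - p) • δ₀ + p • δ₁`. Since the `k` samples only
take the values `0` and `1`, the expectation of `φ` is a polynomial in `p`, hence continuous on
`[0, 1]`. Unbiasedness forces it to equal the maximum `1` for every `p ∈ (0, 1)`, so by continuity
it equals `1` at `p = 0` too, where the law is `δ₀` and the maximum is `0`.
-/

open MeasureTheory

/-- The (topological) support of a measure on ℝ. -/
def msupport (μ : Measure ℝ) : Set ℝ :=
  {x | ∀ U : Set ℝ, IsOpen U → x ∈ U → μ U ≠ 0}

open Set Measure
open scoped ENNReal

namespace MeasureTheory.Measure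

variable {X : Type*} [TopologicalSpace X] [MeasurableSpace X]

lemma support_dirac [T1Space X] [OpensMeasurableSpace X] (x : X) :
    (dirac x).support = {x} := by
  ext y
  rw [mem_support_iff_forall, mem_singleton_iff]
  refine ⟨fun h => ?_, fun hyx U hU => ?_⟩
  · by_contra hyx
    have hnhds : {x}ᶜ ∈ nhds y := isOpen_compl_singleton.mem_nhds hyx
    simpa using h _ hnhds
  · subst hyx
    simp [dirac_apply_of_mem (mem_of_mem_nhds hU)]

lemma support_smul {c : ℝ≥0∞} (hc : c ≠ 0) (μ : Measure X) : (c • μ).support = μ.support := by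
  ext x
  simp only [mem_support_iff_forall, smul_apply, smul_eq_mul, CanonicallyOrderedAdd.mul_pos,
    pos_iff_ne_zero.2 hc, true_and]

end MeasureTheory.Measure

lemma msupport_eq_support (μ : Measure ℝ) : msupport μ = μ.support := by
  simp [msupport, support_eq_forall_isOpen, pos_iff_ne_zero, imp.swap]

noncomputable section

def bernoulliBool (p : ℝ) : Measure Bool :=
  ENNReal.ofReal (1 - p) • dirac false + ENNReal.ofReal p • dirac true

def bernoulliReal (p : ℝ) : Measure ℝ :=
  ENNReal.ofReal (1 - p) • dirac 0 + ENNReal.ofReal p • dirac 1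

end

lemma bernoulliReal_zero : bernoulliReal 0 = dirac 0 := by
  simp [bernoulliReal]

lemma msupport_bernoulliReal {p : ℝ} (hp : p ∈ Ioo 0 1) : msupport (bernoulliReal p) = {0, 1} := by
  rw [msupport_eq_support, bernoulliReal, support_add,
    support_smul (by simpa using hp.2), support_smul (by simpa using hp.1),
    support_dirac, support_dirac, singleton_union]

lemma bernoulliReal_eq_map (p : ℝ) :
    bernoulliReal p = (bernoulliBool p).map (fun b => (b.toNat : ℝ)) := by
  have hb : Measurable (fun b : Bool => (b.toNat : ℝ)) := .of_discrete
  simp [bernoulliReal, bernoulliBool, Measure.map_add _ _ hb, map_dirac' hb]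

lemma isProbabilityMeasure_bernoulliBool {p : ℝ} (hp : p ∈ Icc 0 1) :
    IsProbabilityMeasure (bernoulliBool p) := by
  constructor
  simp [bernoulliBool, ← ENNReal.ofReal_add (sub_nonneg.2 hp.2) hp.1]

lemma isProbabilityMeasure_bernoulliReal {p : ℝ} (hp : p ∈ Icc 0 1) :
    IsProbabilityMeasure (bernoulliReal p) := by
  have := isProbabilityMeasure_bernoulliBool hp
  rw [bernoulliReal_eq_map]
  exact isProbabilityMeasure_map (measurable_of_countable _).aemeasurable

lemma measureReal_bernoulliBool_singleton {p : ℝ} (hp : p ∈ Icc 0 1) (b : Bool) :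
    (bernoulliBool p).real {b} = if b then p else 1 - p := by
  cases b <;> simp [bernoulliBool, measureReal_def, hp.1, hp.2]

lemma integral_pi_map_eq_sum {ι α β : Type*} [Fintype ι] [DecidableEq ι] [Fintype α]
    [MeasurableSpace α] [MeasurableSingletonClass α] [MeasurableSpace β] (ν : Measure α)
    [IsFiniteMeasure ν] (f : α → β) {φ : (ι → β) → ℝ} (hφ : Measurable φ) :
    ∫ x, φ x ∂(Measure.pi fun _ => ν.map f)
      = ∑ ω : ι → α, (∏ i, ν.real {ω i}) * φ (fun i => f (ω i)) := by
  rw [← pi_map_pi fun _ => (measurable_of_countable f).aemeasurable,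
    integral_map (measurable_of_countable _).aemeasurable hφ.aestronglyMeasurable,
    integral_fintype Integrable.of_finite]
  simp [measureReal_def, ENNReal.toReal_prod]

lemma integral_pi_bernoulliReal {ι : Type*} [Fintype ι] [DecidableEq ι] {p : ℝ}
    (hp : p ∈ Icc 0 1) {φ : (ι → ℝ) → ℝ} (hφ : Measurable φ) :
    ∫ x, φ x ∂(Measure.pi fun _ => bernoulliReal p)
      = ∑ ω : ι → Bool, (∏ i, if ω i then p else 1 - p) * φ (fun i => ((ω i).toNat : ℝ)) := by
  have := isProbabilityMeasure_bernoulliBool hp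
  simp only [bernoulliReal_eq_map, integral_pi_map_eq_sum _ _ hφ,
    measureReal_bernoulliBool_singleton hp]

lemma continuousOn_integral_pi_bernoulliReal {ι : Type*} [Fintype ι] [DecidableEq ι]
    {φ : (ι → ℝ) → ℝ} (hφ : Measurable φ) :
    ContinuousOn (fun p => ∫ x, φ x ∂(Measure.pi fun _ => bernoulliReal p)) (Icc 0 1) := by
  refine ContinuousOn.congr (Continuous.continuousOn ?_) fun p hp =>
    integral_pi_bernoulliReal hp hφ
  refine continuous_finsetSum _ fun ω _ =>
    .mul (continuous_finsetProd _ fun i _ => ?_) continuous_const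
  exact continuous_if_const _ (fun _ => continuous_id) fun _ => by fun_prop

theorem max_not_unbiasedly_estimable_general (k : ℕ) :
    ¬ ∃ φ : (Fin k → ℝ) → ℝ, Measurable φ ∧
      ∀ η : Measure ℝ, IsProbabilityMeasure η → (msupport η).Finite →
        (∫ x : Fin k → ℝ, φ x ∂(Measure.pi fun _ : Fin k => η)) = sSup (msupport η) := by
  rintro ⟨φ, hφ, hunbiased⟩
  set E := fun p : ℝ => ∫ x, φ x ∂(Measure.pi fun _ : Fin k => bernoulliReal p)
  have hE_one : EqOn E 1 (Ioo 0 1) := fun p hp => by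
    have := isProbabilityMeasure_bernoulliReal (Ioo_subset_Icc_self hp)
    simp only [E, hunbiased _ this (by simp [msupport_bernoulliReal hp]),
      msupport_bernoulliReal hp, csSup_pair, zero_le_one, sup_of_le_right, Pi.one_apply]
  have hE_zero : E 0 = 0 := by
    have hsupp : msupport (dirac 0) = {0} := by rw [msupport_eq_support, support_dirac]
    simp only [E, bernoulliReal_zero]
    rw [hunbiased (dirac 0) inferInstance (by simp [hsupp]), hsupp, csSup_singleton]
  have hE_closure : EqOn E 1 (Icc 0 1) :=
    hE_one.of_subset_closure (continuousOn_integral_pi_bernoulliReal hφ) continuousOn_const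
      Ioo_subset_Icc_self (closure_Ioo zero_ne_one).superset
  simpa [hE_zero] using hE_closure (left_mem_Icc.2 zero_le_one)

/-- The maximum functional is not Bellman unbiased: for any `k ≥ 1` there is no
(measurable) function `φ : ℝ^k → ℝ` whose expectation under `k` i.i.d. samples from
every finitely supported probability distribution equals the maximum of its support. -/
theorem max_not_unbiasedly_estimable (k : ℕ) (hk : 1 ≤ k) :
    ¬ ∃ φ : (Fin k → ℝ) → ℝ, Measurable φ ∧
      ∀ η : Measure ℝ, IsProbabilityMeasure η → (msupport η).Finite →
        (∫ x : Fin k → ℝ, φ x ∂(Measure.pi fun _ : Fin k => η)) = sSup (msupport η) :=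
  max_not_unbiasedly_estimable_general k
end

section
/- If L disjoint subsequences Z₁,…,Z_L of observed points each certify ε-dependence of a point x with respect to a pair f, g satisfying |f⁽¹⁾(x) − g⁽¹⁾(x)| > ε, then ‖f − g‖²_Z ≥ L·ε² where Z = Z₁ ∪ ⋯ ∪ Z_L. Consequently, if additionally ‖f − f̂‖²_Z ≤ β and ‖g − f̂‖²_Z ≤ β for some f̂, then L ≤ 4β/ε². -/
open scoped BigOperators

/-- Squared data norm of a vector-valued function over a finite set of points. -/
def fnormSq {X : Type} {N : ℕ} (g : X → Fin (N + 1) → ℝ) (Z : Finset X) : ℝ :=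
  ∑ x ∈ Z, ∑ n, (g x n) ^ 2

/-- `x` is `ε`-dependent on the set `Z` w.r.t. `F`. -/
def EpsDepF {X : Type} {N : ℕ} (F : Set (X → Fin (N + 1) → ℝ)) (ε : ℝ) (x : X)
    (Z : Finset X) : Prop :=
  ∀ f ∈ F, ∀ g ∈ F, fnormSq (f - g) Z ≤ ε ^ 2 → |f x 0 - g x 0| ≤ ε

/-! Each disjoint block that certifies `ε`-dependence must carry more than `ε²` of the squared
distance between `f` and `g`, since otherwise the certificate would force their gap at `x`
below `ε`; summing over the blocks gives `L ε²`. On the other hand `f` and `g` both lie within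
`√β` of `f̂`, so their squared distance is at most `2β + 2β`. -/

section fnormSq

variable {X : Type} {N : ℕ}

theorem fnormSq_biUnion [DecidableEq X] {ι : Type*} (h : X → Fin (N + 1) → ℝ) {s : Finset ι}
    {B : ι → Finset X} (hB : (s : Set ι).PairwiseDisjoint B) :
    fnormSq h (s.biUnion B) = ∑ i ∈ s, fnormSq h (B i) :=
  Finset.sum_biUnion hB

theorem fnormSq_sub_le (f g h : X → Fin (N + 1) → ℝ) (Z : Finset X) :
    fnormSq (f - g) Z ≤ 2 * fnormSq (f - h) Z + 2 * fnormSq (g - h) Z := by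
  simp only [fnormSq, Finset.mul_sum, ← Finset.sum_add_distrib]
  gcongr with y _ n _
  calc (f - g) y n ^ 2 = ((f y n - h y n) + (h y n - g y n)) ^ 2 := by simp only [Pi.sub_apply]; ring
    _ ≤ 2 * ((f y n - h y n) ^ 2 + (h y n - g y n) ^ 2) := add_sq_le
    _ = 2 * (f - h) y n ^ 2 + 2 * (g - h) y n ^ 2 := by simp only [Pi.sub_apply]; ring

theorem sq_lt_fnormSq_of_epsDepF {F : Set (X → Fin (N + 1) → ℝ)} {ε : ℝ} {x : X}
    {Z : Finset X} (hdep : EpsDepF F ε x Z) {f g : X → Fin (N + 1) → ℝ} (hf : f ∈ F)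
    (hg : g ∈ F) (hgap : ε < |f x 0 - g x 0|) : ε ^ 2 < fnormSq (f - g) Z :=
  lt_of_not_ge fun hle => (hdep f hf g hg hle).not_gt hgap

theorem card_mul_sq_le_fnormSq_biUnion [DecidableEq X] {ι : Type*}
    {F : Set (X → Fin (N + 1) → ℝ)} {ε : ℝ} {x : X} {s : Finset ι} {B : ι → Finset X}
    (hB : (s : Set ι).PairwiseDisjoint B) (hdep : ∀ i ∈ s, EpsDepF F ε x (B i))
    {f g : X → Fin (N + 1) → ℝ} (hf : f ∈ F) (hg : g ∈ F) (hgap : ε < |f x 0 - g x 0|) :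
    s.card * ε ^ 2 ≤ fnormSq (f - g) (s.biUnion B) := by
  rw [fnormSq_biUnion _ hB, ← nsmul_eq_mul, ← Finset.sum_const]
  exact Finset.sum_le_sum fun i hi => (sq_lt_fnormSq_of_epsDepF (hdep i hi) hf hg hgap).le

end fnormSq

theorem disjoint_dependence_norm_lower_bound_general
    {X : Type} [DecidableEq X] {N L : ℕ}
    (F : Set (X → Fin (N + 1) → ℝ)) (ε β : ℝ) (hε : 0 < ε)
    (B : Fin L → Finset X) (hdisj : ∀ i j, i ≠ j → Disjoint (B i) (B j))
    (x : X) (f g fhat : X → Fin (N + 1) → ℝ) (hf : f ∈ F) (hg : g ∈ F)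
    (hdep : ∀ i, EpsDepF F ε x (B i)) (hgap : ε < |f x 0 - g x 0|) :
    (L : ℝ) * ε ^ 2 ≤ fnormSq (f - g) (Finset.univ.biUnion B) ∧
    (fnormSq (f - fhat) (Finset.univ.biUnion B) ≤ β →
      fnormSq (g - fhat) (Finset.univ.biUnion B) ≤ β →
      (L : ℝ) ≤ 4 * β / ε ^ 2) := by
  have hlow : (L : ℝ) * ε ^ 2 ≤ fnormSq (f - g) (Finset.univ.biUnion B) := by
    simpa using card_mul_sq_le_fnormSq_biUnion (s := Finset.univ)
      (fun i _ j _ hij => hdisj i j hij) (fun i _ => hdep i) hf hg hgap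
  refine ⟨hlow, fun hfβ hgβ => ?_⟩
  rw [le_div_iff₀ (by positivity)]
  linarith [fnormSq_sub_le f g fhat (Finset.univ.biUnion B)]

/-- If `L` pairwise disjoint subsequences each certify `ε`-dependence of `x` while the
pair `f, g` has first-coordinate gap exceeding `ε` at `x`, then
`‖f − g‖²_Z ≥ L·ε²` on the union `Z`; consequently, if moreover
`‖f − f̂‖²_Z ≤ β` and `‖g − f̂‖²_Z ≤ β`, then `L ≤ 4β/ε²`. -/
theorem disjoint_dependence_norm_lower_bound
    {X : Type} [DecidableEq X] {N L : ℕ}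
    (F : Set (X → Fin (N + 1) → ℝ)) (ε β : ℝ) (hε : 0 < ε) (hβ : 0 < β)
    (B : Fin L → Finset X) (hdisj : ∀ i j, i ≠ j → Disjoint (B i) (B j))
    (x : X) (f g fhat : X → Fin (N + 1) → ℝ) (hf : f ∈ F) (hg : g ∈ F)
    (hdep : ∀ i, EpsDepF F ε x (B i)) (hgap : ε < |f x 0 - g x 0|) :
    (L : ℝ) * ε ^ 2 ≤ fnormSq (f - g) (Finset.univ.biUnion B) ∧
    (fnormSq (f - fhat) (Finset.univ.biUnion B) ≤ β →
      fnormSq (g - fhat) (Finset.univ.biUnion B) ≤ β →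
      (L : ℝ) ≤ 4 * β / ε ^ 2) :=
  disjoint_dependence_norm_lower_bound_general F ε β hε B hdisj x f g fhat hf hg hdep hgap
end

section
/- Sorted-width summation bound: let e₁ ≥ e₂ ≥ ⋯ ≥ e_T be a nonincreasing sequence in [0, H] such that for every t and every ε > 0 with e_t ≥ ε, one has t ≤ (4β/ε² + 1)·d for a fixed constant d ≥ 1 (with β > 0, H > 0). Then ∑_{t=1}^T e_t ≤ H·d + √(16·d·T·β); moreover, if the hypothesis holds in the strengthened form t ≤ (4β/(M·e_t²) + 1)·d for all M > 0 whenever e_t ≥ 1/(√M·T), then ∑_{t=1}^T e_t ≤ H·d. -/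
/-!
Every width satisfies `e_t² (t + 1 - d) ≤ c²`: with `c = 2√(βd)` from the counting bound at
`ε = e_t`, and with `c = 0` from the strengthened bound by letting `M → ∞`. Such widths are
dominated termwise by the increments of `Φ(x) = H·min(x, d) + 2c·√(x - d)`, a discrete
antiderivative of `min(H, c / √(x - d))`, so their sum telescopes to `Φ(T) ≤ H d + 2c√T`.
-/

open Filter Topology

-- `√` vanishes on negative arguments, so `widthPotential H d c x = H * x` for `x ≤ d`.
noncomputable def widthPotential (H d c x : ℝ) : ℝ := H * min x d + 2 * c * √(x - d)

section
variable {H d c : ℝ}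

lemma widthPotential_zero (hd : 0 ≤ d) : widthPotential H d c 0 = 0 := by
  simp [widthPotential, hd, Real.sqrt_eq_zero']

lemma widthPotential_le (hH : 0 ≤ H) (hc : 0 ≤ c) (hd : 0 ≤ d) (x : ℝ) :
    widthPotential H d c x ≤ H * d + 2 * c * √x := by
  unfold widthPotential
  gcongr
  · exact min_le_right x d
  · linarith

lemma le_widthPotential_succ_sub {a x : ℝ} (ha : 0 ≤ a) (haH : a ≤ H) (hc : 0 ≤ c)
    (h : a ^ 2 * (x + 1 - d) ≤ c ^ 2) :
    a ≤ widthPotential H d c (x + 1) - widthPotential H d c x := by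
  unfold widthPotential
  rcases le_or_gt (x + 1) d with hxd | hdx
  · rw [min_eq_left hxd, min_eq_left (by linarith), Real.sqrt_eq_zero'.2 (by linarith),
      Real.sqrt_eq_zero'.2 (by linarith)]
    linarith
  have hu : √(x + 1 - d) ^ 2 = x + 1 - d := Real.sq_sqrt (by linarith)
  have hau : a * √(x + 1 - d) ≤ c := by
    refine (pow_le_pow_iff_left₀ (by positivity) hc two_ne_zero).1 ?_
    rwa [mul_pow, hu]
  rcases le_or_gt d x with hdx' | hxd
  · rw [min_eq_right (by linarith), min_eq_right hdx']
    have hv : √(x - d) ^ 2 = x - d := Real.sq_sqrt (by linarith)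
    have hgap : 1 ≤ 2 * √(x + 1 - d) * (√(x + 1 - d) - √(x - d)) := by
      nlinarith [sq_nonneg (√(x + 1 - d) - √(x - d))]
    nlinarith [Real.sqrt_nonneg (x - d), Real.sqrt_le_sqrt (show x - d ≤ x + 1 - d by linarith)]
  · rw [min_eq_right hdx.le, min_eq_left hxd.le,
      Real.sqrt_eq_zero'.2 (show x - d ≤ 0 by linarith)]
    -- `a = (1 - u) a + u a` with `u = x + 1 - d ∈ (0, 1)`; bound `a ≤ H` and `a √u ≤ c`
    nlinarith [mul_le_mul_of_nonneg_right hau (Real.sqrt_nonneg (x + 1 - d)),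
      mul_le_mul_of_nonneg_right haH (show 0 ≤ d - x by linarith)]

theorem sum_le_of_sq_mul_sub_le {T : ℕ} (e : Fin T → ℝ) (hH : 0 ≤ H) (hd : 0 ≤ d)
    (hc : 0 ≤ c) (he : ∀ t, 0 ≤ e t ∧ e t ≤ H)
    (hsq : ∀ t : Fin T, e t ^ 2 * ((t : ℕ) + 1 - d) ≤ c ^ 2) :
    ∑ t, e t ≤ H * d + 2 * c * √T := by
  let Φ : ℕ → ℝ := fun n => widthPotential H d c n
  calc ∑ t, e t ≤ ∑ t : Fin T, (Φ (t + 1) - Φ t) := by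
        gcongr with t
        simpa [Φ] using le_widthPotential_succ_sub (he t).1 (he t).2 hc (hsq t)
    _ = Φ T - Φ 0 := by
        rw [Fin.sum_univ_eq_sum_range (fun n => Φ (n + 1) - Φ n), Finset.sum_range_sub]
    _ ≤ H * d + 2 * c * √T := by
        simpa [Φ, widthPotential_zero hd] using widthPotential_le hH hc hd T
end

lemma sq_mul_sub_le_of_le_div_sq_add_one {a n K d : ℝ} (ha : a ≠ 0)
    (h : n ≤ (K / a ^ 2 + 1) * d) : a ^ 2 * (n - d) ≤ K * d := by
  calc a ^ 2 * (n - d) ≤ a ^ 2 * (K / a ^ 2 * d) := by gcongr; linarith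
    _ = K * d := by field_simp

lemma sq_mul_sub_nonpos_of_forall_le {a n K d T : ℝ} (ha : 0 ≤ a) (hT : 0 < T)
    (h : ∀ M : ℝ, 0 < M → 1 / (√M * T) ≤ a → n ≤ (K / (M * a ^ 2) + 1) * d) :
    a ^ 2 * (n - d) ≤ 0 := by
  rcases ha.eq_or_lt with rfl | hpos
  · simp
  have hsmall : Tendsto (fun M => 1 / (√M * T)) atTop (𝓝 0) :=
    tendsto_const_nhds.div_atTop (Real.tendsto_sqrt_atTop.atTop_mul_const hT)
  refine ge_of_tendsto ((tendsto_const_nhds (x := K * d)).div_atTop tendsto_id) ?_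
  filter_upwards [eventually_gt_atTop 0, hsmall.eventually (ge_mem_nhds hpos)] with M hM hMa
  have hM' := h M hM hMa
  rw [← div_div] at hM'
  simpa only [id, div_mul_eq_mul_div] using sq_mul_sub_le_of_le_div_sq_add_one hpos.ne' hM'

theorem sorted_width_sum_bound_general
    (T : ℕ) (e : Fin T → ℝ) (H β d : ℝ) (hH : 0 < H) (hβ : 0 < β) (hd : 1 ≤ d)
    (hrange : ∀ t, 0 ≤ e t ∧ e t ≤ H) :
    ((∀ (t : Fin T) (ε : ℝ), 0 < ε → ε ≤ e t →
        ((t : ℕ) : ℝ) + 1 ≤ (4 * β / ε ^ 2 + 1) * d) →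
      ∑ t, e t ≤ H * d + Real.sqrt (16 * d * T * β)) ∧
    ((∀ M : ℝ, 0 < M → ∀ t : Fin T, 1 / (Real.sqrt M * T) ≤ e t →
        ((t : ℕ) : ℝ) + 1 ≤ (4 * β / (M * (e t) ^ 2) + 1) * d) →
      ∑ t, e t ≤ H * d) := by
  have hd₀ : 0 ≤ d := by linarith
  refine ⟨fun hcount => ?_, fun hcount => ?_⟩
  · have hsq (t : Fin T) : e t ^ 2 * ((t : ℕ) + 1 - d) ≤ (2 * √(β * d)) ^ 2 := by
      rw [mul_pow, Real.sq_sqrt (by positivity)]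
      rcases (hrange t).1.eq_or_lt with h₀ | hpos
      · rw [← h₀, zero_pow two_ne_zero, zero_mul]
        positivity
      · linarith [sq_mul_sub_le_of_le_div_sq_add_one hpos.ne' (hcount t _ hpos le_rfl)]
    have hsqrt : √(16 * d * T * β) = 2 * (2 * √(β * d)) * √T := by
      rw [show 16 * d * T * β = 4 ^ 2 * (β * d) * T by ring, Real.sqrt_mul (by positivity),
        Real.sqrt_mul (by positivity), Real.sqrt_sq (by norm_num)]
      ring
    rw [hsqrt]
    exact sum_le_of_sq_mul_sub_le e hH.le hd₀ (by positivity) hrange hsq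
  · have hsq (t : Fin T) : e t ^ 2 * ((t : ℕ) + 1 - d) ≤ 0 ^ 2 := by
      rw [zero_pow two_ne_zero]
      exact sq_mul_sub_nonpos_of_forall_le (hrange t).1 (Nat.cast_pos.2 t.pos)
        fun M hM hMt => hcount M hM t hMt
    simpa using sum_le_of_sq_mul_sub_le e hH.le hd₀ le_rfl hrange hsq

/-- Sorted-width summation bound: for a nonincreasing sequence `e₁ ≥ ⋯ ≥ e_T` in
`[0, H]` satisfying the eluder counting bound, `∑ e_t ≤ H·d + √(16·d·T·β)`; under the
strengthened counting bound (uniform in `M`), `∑ e_t ≤ H·d`. -/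
theorem sorted_width_sum_bound
    (T : ℕ) (e : Fin T → ℝ) (H β d : ℝ) (hH : 0 < H) (hβ : 0 < β) (hd : 1 ≤ d)
    (hmono : ∀ i j : Fin T, i ≤ j → e j ≤ e i)
    (hrange : ∀ t, 0 ≤ e t ∧ e t ≤ H) :
    ((∀ (t : Fin T) (ε : ℝ), 0 < ε → ε ≤ e t →
        ((t : ℕ) : ℝ) + 1 ≤ (4 * β / ε ^ 2 + 1) * d) →
      ∑ t, e t ≤ H * d + Real.sqrt (16 * d * T * β)) ∧
    ((∀ M : ℝ, 0 < M → ∀ t : Fin T, 1 / (Real.sqrt M * T) ≤ e t →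
        ((t : ℕ) : ℝ) + 1 ≤ (4 * β / (M * (e t) ^ 2) + 1) * d) →
      ∑ t, e t ≤ H * d) :=
  sorted_width_sum_bound_general T e H β d hH hβ hd hrange
end

section
/- Regret decomposition for optimistic value iteration: suppose for all episodes k and steps h, the optimistic value functions satisfy Q*ₕ(s,a) ≤ Qᵏₕ(s,a) pointwise, Qᵏₕ(sᵏₕ, aᵏₕ) − (rₕ(sᵏₕ,aᵏₕ) + E_{s'∼Pₕ(·|sᵏₕ,aᵏₕ)}[Vᵏₕ₊₁(s')]) ≤ 2·bᵏₕ(sᵏₕ,aᵏₕ), and the executed policy satisfies the Bellman equation for Q^{πᵏ}. Then the regret ∑ₖ (V*₁(sᵏ₁) − V^{πᵏ}₁(sᵏ₁)) is at most ∑ₖ∑ₕ (2·bᵏₕ(sᵏₕ,aᵏₕ) + ξᵏₕ), where ξᵏₕ = E_{s'∼Pₕ(·|sᵏₕ,aᵏₕ)}[(Vᵏₕ₊₁ − V^{πᵏ}ₕ₊₁)(s')] − (Vᵏₕ₊₁(sᵏₕ₊₁) − V^{πᵏ}ₕ₊₁(sᵏₕ₊₁)) is a martingale difference with respect to the trajectory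 filtration. -/
/-!
Optimism gives `V*₁ ≤ Vᵏ₁`, so each episode's regret is at most `Vᵏ₁(sᵏ₁) − V^{πᵏ}₁(sᵏ₁)`.
Along the trajectory, the Bellman equation of `πᵏ` and the bonus bound on the optimistic
Bellman residual give the one-step recursion
`(Vᵏₕ − V^{πᵏ}ₕ)(sᵏₕ) ≤ 2 bᵏₕ(sᵏₕ, aᵏₕ) + ξᵏₕ + (Vᵏₕ₊₁ − V^{πᵏ}ₕ₊₁)(sᵏₕ₊₁)`,
which telescopes over `h = 1, …, H` down to the terminal gap `0`.
-/

open Finset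

theorem le_sum_Ico_add_of_le_add_succ {M : Type*} [AddCommGroup M] [PartialOrder M]
    [IsOrderedAddMonoid M] {c d : ℕ → M} {m n : ℕ} (hmn : m ≤ n)
    (hstep : ∀ i ∈ Ico m n, d i ≤ c i + d (i + 1)) :
    d m ≤ ∑ i ∈ Ico m n, c i + d n := by
  have htel : ∑ i ∈ Ico m n, (d i - d (i + 1)) = d m - d n := by
    rw [← neg_sub, ← sum_Ico_sub d hmn, ← sum_neg_distrib]
    simp only [neg_sub]
  rw [← sub_le_iff_le_add, ← htel]
  exact sum_le_sum fun i hi => sub_le_iff_le_add.mpr (hstep i hi)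

theorem sub_bellman_le_of_residual_le {S : Type*} [Fintype S] {p vk vπ : S → ℝ} {q ρ β : ℝ}
    (hres : q - (ρ + ∑ x, p x * vk x) ≤ β) :
    q - (ρ + ∑ x, p x * vπ x) ≤ β + ∑ x, p x * (vk x - vπ x) := by
  simp only [mul_sub, sum_sub_distrib]
  linarith

/-- Regret decomposition for optimistic value iteration in a finite episodic MDP:
if the optimistic `Q`-estimates dominate `Q*`, are greedy-consistent, and their Bellman
residuals at the visited pairs are bounded by twice the bonuses, then the total regret
is bounded by the summed bonuses plus the martingale-difference terms `ξ`. -/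
theorem regret_decomposition
    (S A : Type) [Fintype S]
    (H K : ℕ)
    (P : ℕ → S → A → S → ℝ) (r : ℕ → S → A → ℝ)
    (Qstar : ℕ → S → A → ℝ) (Vstar : ℕ → S → ℝ) (πstar : ℕ → S → A)
    (Qk Qπ : ℕ → ℕ → S → A → ℝ) (Vk Vπ : ℕ → ℕ → S → ℝ)
    (π : ℕ → ℕ → S → A) (b : ℕ → ℕ → S → A → ℝ)
    (s : ℕ → ℕ → S) (a : ℕ → ℕ → A)
    (ξ : ℕ → ℕ → ℝ)
    -- optimism: Q* ≤ Qᵏ pointwise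
    (hopt : ∀ k h (x : S) (u : A), Qstar h x u ≤ Qk k h x u)
    -- V* is attained by an optimal action
    (hVstar : ∀ h x, Vstar h x = Qstar h x (πstar h x))
    -- greedy policy and value definitions for the optimistic estimates
    (hgreedy : ∀ k h x u, Qk k h x u ≤ Qk k h x (π k h x))
    (hVk : ∀ k h x, Vk k h x = Qk k h x (π k h x))
    (hVπ : ∀ k h x, Vπ k h x = Qπ k h x (π k h x))
    -- executed actions follow the greedy policy
    (ha : ∀ k h, a k h = π k h (s k h))
    -- Bellman equation for the executed policy πᵏ
    (hBellπ : ∀ k h x u,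
      Qπ k h x u = r h x u + ∑ x' : S, P h x u x' * Vπ k (h + 1) x')
    -- bonus bound for the optimistic Bellman residual at the visited pairs
    (hbonus : ∀ k h,
      Qk k h (s k h) (a k h)
          - (r h (s k h) (a k h)
            + ∑ x' : S, P h (s k h) (a k h) x' * Vk k (h + 1) x')
        ≤ 2 * b k h (s k h) (a k h))
    -- terminal condition
    (hterm : ∀ k x, Vk k (H + 1) x = 0 ∧ Vπ k (H + 1) x = 0)
    -- definition of the martingale difference terms
    (hξ : ∀ k h, ξ k h
      = (∑ x' : S, P h (s k h) (a k h) x' * (Vk k (h + 1) x' - Vπ k (h + 1) x'))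
        - (Vk k (h + 1) (s k (h + 1)) - Vπ k (h + 1) (s k (h + 1)))) :
    ∑ k ∈ Finset.range K, (Vstar 1 (s k 1) - Vπ k 1 (s k 1))
      ≤ ∑ k ∈ Finset.range K, ∑ h ∈ Finset.Icc 1 H,
          (2 * b k h (s k h) (a k h) + ξ k h) := by
  refine sum_le_sum fun k _ => ?_
  set gap := fun h => Vk k h (s k h) - Vπ k h (s k h)
  have hoptimism : Vstar 1 (s k 1) ≤ Vk k 1 (s k 1) := by
    rw [hVstar, hVk]
    exact (hopt k 1 _ _).trans (hgreedy k 1 _ _)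
  have hstep : ∀ h, gap h ≤ (2 * b k h (s k h) (a k h) + ξ k h) + gap (h + 1) := by
    intro h
    have hres := sub_bellman_le_of_residual_le (vπ := Vπ k (h + 1)) (hbonus k h)
    simp only [gap, hξ, hVk k h, hVπ k h, ← ha, hBellπ] at hres ⊢
    linarith
  have htel := le_sum_Ico_add_of_le_add_succ (Nat.le_add_left 1 H) fun h _ => hstep h
  simp only [gap, Ico_add_one_right_eq_Icc, hterm, sub_zero, add_zero] at htel
  linarith
end
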